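/- For every λ ∈ ℝ, the even linear map ω̃_λ(f) = 2λ m_{η̄₁(∂₂f)} − (−1)^{|f|}(m_{∂₂f}∘η̄₁ + m_{θ₂η̄₂η̄₁(f)}∘η̄₂) is a 1-cocycle of 𝔬𝔰𝔭(2|2) with values in 𝔇_{λ,λ}: for all homogeneous f, g ∈ 𝔬𝔰𝔭(2|2), f·ω̃_λ(g) − (−1)^{|f||g|} g·ω̃_λ(f) − ω̃_λ({f,g}) = 0 for the (λ,λ)-action. -/

import Mathlib

noncomputable section

namespace OSP

/-- Smooth real functions. -/
def Smooth (f : ℝ → ℝ) : Prop := ContDiff ℝ ((⊤ : ℕ∞) : WithTop ℕ∞) f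

theorem Smooth.const (c : ℝ) : Smooth fun _ => c := contDiff_const
theorem Smooth.add {f g : ℝ → ℝ} (hf : Smooth f) (hg : Smooth g) :
    Smooth fun x => f x + g x := ContDiff.add hf hg
theorem Smooth.mul {f g : ℝ → ℝ} (hf : Smooth f) (hg : Smooth g) :
    Smooth fun x => f x * g x := ContDiff.mul hf hg
theorem Smooth.neg {f : ℝ → ℝ} (hf : Smooth f) : Smooth fun x => -(f x) := ContDiff.neg hf
theorem Smooth.sub {f g : ℝ → ℝ} (hf : Smooth f) (hg : Smooth g) :
    Smooth fun x => f x - g x := ContDiff.sub hf hg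
theorem Smooth.smul (r : ℝ) {f : ℝ → ℝ} (hf : Smooth f) :
    Smooth fun x => r * f x := (Smooth.const r).mul hf
theorem Smooth.deriv {f : ℝ → ℝ} (hf : Smooth f) : Smooth (deriv f) :=
  (contDiff_infty_iff_deriv.mp hf).2
theorem Smooth.id : Smooth fun x : ℝ => x := contDiff_id

/-- The superalgebra `A = C^∞(ℝ^{1|2})`: elements `f₀ + f₁θ₁ + f₂θ₂ + f₁₂θ₁θ₂`
with smooth coefficients. -/
structure SA where
  c0 : ℝ → ℝ
  c1 : ℝ → ℝ
  c2 : ℝ → ℝ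
  c12 : ℝ → ℝ
  h0 : Smooth c0
  h1 : Smooth c1
  h2 : Smooth c2
  h12 : Smooth c12

namespace SA

instance : Zero SA :=
  ⟨⟨fun _ => 0, fun _ => 0, fun _ => 0, fun _ => 0,
    Smooth.const 0, Smooth.const 0, Smooth.const 0, Smooth.const 0⟩⟩

instance : One SA :=
  ⟨⟨fun _ => 1, fun _ => 0, fun _ => 0, fun _ => 0,
    Smooth.const 1, Smooth.const 0, Smooth.const 0, Smooth.const 0⟩⟩

instance : Add SA :=
  ⟨fun f g => ⟨fun x => f.c0 x + g.c0 x, fun x => f.c1 x + g.c1 x,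
    fun x => f.c2 x + g.c2 x, fun x => f.c12 x + g.c12 x,
    f.h0.add g.h0, f.h1.add g.h1, f.h2.add g.h2, f.h12.add g.h12⟩⟩

instance : Neg SA :=
  ⟨fun f => ⟨fun x => -(f.c0 x), fun x => -(f.c1 x), fun x => -(f.c2 x), fun x => -(f.c12 x),
    f.h0.neg, f.h1.neg, f.h2.neg, f.h12.neg⟩⟩

instance : Sub SA :=
  ⟨fun f g => ⟨fun x => f.c0 x - g.c0 x, fun x => f.c1 x - g.c1 x,
    fun x => f.c2 x - g.c2 x, fun x => f.c12 x - g.c12 x,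
    f.h0.sub g.h0, f.h1.sub g.h1, f.h2.sub g.h2, f.h12.sub g.h12⟩⟩

instance : SMul ℝ SA :=
  ⟨fun r f => ⟨fun x => r * f.c0 x, fun x => r * f.c1 x,
    fun x => r * f.c2 x, fun x => r * f.c12 x,
    f.h0.smul r, f.h1.smul r, f.h2.smul r, f.h12.smul r⟩⟩

/-- Supercommutative product determined by `θᵢθⱼ = -θⱼθᵢ`. -/
instance : Mul SA :=
  ⟨fun f g => ⟨fun x => f.c0 x * g.c0 x,
    fun x => f.c0 x * g.c1 x + f.c1 x * g.c0 x,
    fun x => f.c0 x * g.c2 x + f.c2 x * g.c0 x,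
    fun x => f.c0 x * g.c12 x + f.c12 x * g.c0 x + f.c1 x * g.c2 x - f.c2 x * g.c1 x,
    f.h0.mul g.h0,
    (f.h0.mul g.h1).add (f.h1.mul g.h0),
    (f.h0.mul g.h2).add (f.h2.mul g.h0),
    (((f.h0.mul g.h12).add (f.h12.mul g.h0)).add (f.h1.mul g.h2)).sub (f.h2.mul g.h1)⟩⟩

/-- The even coordinate `x`. -/
def xe : SA := ⟨fun x => x, fun _ => 0, fun _ => 0, fun _ => 0,
  Smooth.id, Smooth.const 0, Smooth.const 0, Smooth.const 0⟩

/-- `x²`. -/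
def xsq : SA := ⟨fun x => x * x, fun _ => 0, fun _ => 0, fun _ => 0,
  Smooth.id.mul Smooth.id, Smooth.const 0, Smooth.const 0, Smooth.const 0⟩

/-- `θ₁`. -/
def th1 : SA := ⟨fun _ => 0, fun _ => 1, fun _ => 0, fun _ => 0,
  Smooth.const 0, Smooth.const 1, Smooth.const 0, Smooth.const 0⟩

/-- `θ₂`. -/
def th2 : SA := ⟨fun _ => 0, fun _ => 0, fun _ => 1, fun _ => 0,
  Smooth.const 0, Smooth.const 0, Smooth.const 1, Smooth.const 0⟩

/-- `xθ₁`. -/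
def xth1 : SA := ⟨fun _ => 0, fun x => x, fun _ => 0, fun _ => 0,
  Smooth.const 0, Smooth.id, Smooth.const 0, Smooth.const 0⟩

/-- `xθ₂`. -/
def xth2 : SA := ⟨fun _ => 0, fun _ => 0, fun x => x, fun _ => 0,
  Smooth.const 0, Smooth.const 0, Smooth.id, Smooth.const 0⟩

/-- `θ₁θ₂`. -/
def th12 : SA := ⟨fun _ => 0, fun _ => 0, fun _ => 0, fun _ => 1,
  Smooth.const 0, Smooth.const 0, Smooth.const 0, Smooth.const 1⟩

/-- The even derivation `∂ₓ` (derivative of the coefficients). -/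
def dx (f : SA) : SA := ⟨deriv f.c0, deriv f.c1, deriv f.c2, deriv f.c12,
  f.h0.deriv, f.h1.deriv, f.h2.deriv, f.h12.deriv⟩

/-- The odd derivation `∂₁ = ∂/∂θ₁`. -/
def d1 (f : SA) : SA := ⟨f.c1, fun _ => 0, f.c12, fun _ => 0,
  f.h1, Smooth.const 0, f.h12, Smooth.const 0⟩

/-- The odd derivation `∂₂ = ∂/∂θ₂`. -/
def d2 (f : SA) : SA := ⟨f.c2, fun x => -(f.c12 x), fun _ => 0, fun _ => 0,
  f.h2, f.h12.neg, Smooth.const 0, Smooth.const 0⟩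

/-- `η̄₁ = ∂₁ - θ₁∂ₓ`. -/
def eta1 (f : SA) : SA := d1 f - th1 * dx f

/-- `η̄₂ = ∂₂ - θ₂∂ₓ`. -/
def eta2 (f : SA) : SA := d2 f - th2 * dx f

/-- `-∂ₓ` (so that `η̄ᵢ^{2j+1} = (-∂ₓ)^j ∘ η̄ᵢ`). -/
def ndx (f : SA) : SA := -(dx f)

/-- `f` is even: no `θ₁`, `θ₂` components. -/
def IsEven (f : SA) : Prop := (∀ x, f.c1 x = 0) ∧ (∀ x, f.c2 x = 0)

/-- `f` is odd: no `1`, `θ₁θ₂` components. -/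
def IsOdd (f : SA) : Prop := (∀ x, f.c0 x = 0) ∧ (∀ x, f.c12 x = 0)

/-- The sign `(-1)^p` of a parity `p` (`false` = even, `true` = odd). -/
def sgn (p : Bool) : ℝ := if p then -1 else 1

/-- `f` is homogeneous of parity `p`. -/
def Homog (p : Bool) (f : SA) : Prop := if p then IsOdd f else IsEven f

/-- The contact (Poisson) bracket `{f,g}` for `f` homogeneous of parity `p`:
`{f,g} = fg' - f'g - ½(-1)^{|f|}(η̄₁(f)η̄₁(g) + η̄₂(f)η̄₂(g))`. -/
def cbr (p : Bool) (f g : SA) : SA :=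
  f * dx g - dx f * g - (sgn p / 2) • (eta1 f * eta1 g + eta2 f * eta2 g)

/-- Even part of `f`. -/
def evenPart (f : SA) : SA := ⟨f.c0, fun _ => 0, fun _ => 0, f.c12,
  f.h0, Smooth.const 0, Smooth.const 0, f.h12⟩

/-- Odd part of `f`. -/
def oddPart (f : SA) : SA := ⟨fun _ => 0, f.c1, f.c2, fun _ => 0,
  Smooth.const 0, f.h1, f.h2, Smooth.const 0⟩

/-- The contact bracket extended bilinearly to all of `A`. -/
def cbrT (f g : SA) : SA := cbr false (evenPart f) g + cbr true (oddPart f) g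

/-- Membership in `𝔬𝔰𝔭(2|2) = Span(1, x, x², θ₁, θ₂, xθ₁, xθ₂, θ₁θ₂)`. -/
def memOsp (f : SA) : Prop :=
  ∃ a b c d e p q r : ℝ,
    f = a • (1 : SA) + b • xe + c • xsq + d • th1 + e • th2
      + p • xth1 + q • xth2 + r • th12

/-- The action `𝔏^λ_f` on λ-densities, for `f` homogeneous of parity `p`. -/
def Ld (lam : ℝ) (p : Bool) (f g : SA) : SA :=
  f * dx g + lam • (dx f * g) - (sgn p / 2) • (eta1 f * eta1 g + eta2 f * eta2 g)

/-- The `(λ,μ)`-action of homogeneous `f` (parity `p`) on a homogeneous operator `T`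
(parity `t`): `f·T = 𝔏^μ_f ∘ T - (-1)^{|f||T|} T ∘ 𝔏^λ_f`. -/
def act (lam mu : ℝ) (p t : Bool) (f : SA) (T : SA → SA) : SA → SA :=
  fun h => Ld mu p f (T h) - sgn (p && t) • T (Ld lam p f h)

/-- The 1-cochain `ω(f) = m_{f'}`. -/
def om (f : SA) : SA → SA := fun h => dx f * h

/-- The 1-cochain
`ω̃_λ(f) = 2λ m_{η̄₁(∂₂f)} - (-1)^{|f|}(m_{∂₂f}∘η̄₁ + m_{θ₂η̄₂η̄₁(f)}∘η̄₂)`. -/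
def omt (lam : ℝ) (p : Bool) (f : SA) : SA → SA := fun h =>
  (2 * lam) • (eta1 (d2 f) * h)
    - sgn p • (d2 f * eta1 h + (th2 * eta2 (eta1 f)) * eta2 h)

/-- The 1-cochain `γ̃₀(f) = m_{η̄₁η̄₂(f)}`. -/
def gamt0 (f : SA) : SA → SA := fun h => eta1 (eta2 f) * h

/-- The 1-cochain `Γ_k(f) = m_{f'}∘η̄₁∘η̄₂^{2k-1}`. -/
def Gam (k : ℕ) (f : SA) : SA → SA := fun h => dx f * eta1 (ndx^[k - 1] (eta2 h))

/-- The 1-cochain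
`Γ̃_k(f) = k m_{η̄₁(∂₂f)}∘η̄₁∘η̄₂^{2k-1} - (-1)^{|f|}(m_{∂₂f}∘η̄₂^{2k+1} - m_{η̄₁(θ₂∂₂f)}∘η̄₁^{2k+1})`. -/
def GamT (k : ℕ) (p : Bool) (f : SA) : SA → SA := fun h =>
  (k : ℝ) • (eta1 (d2 f) * eta1 (ndx^[k - 1] (eta2 h)))
    - sgn p • (d2 f * ndx^[k] (eta2 h) - eta1 (th2 * d2 f) * ndx^[k] (eta1 h))

/-- The 1-cochain
`Γ̄_k(f) = (k-1) m_{f''}∘η̄₁∘η̄₂^{2k-3} + (-1)^{|f|}(m_{η̄₂(f')}∘η̄₁^{2k-1} - m_{η̄₁(f')}∘η̄₂^{2k-1})`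
(the first term is absent for `k = 1`, its coefficient being `0`). -/
def GamB (k : ℕ) (p : Bool) (f : SA) : SA → SA := fun h =>
  ((k : ℝ) - 1) • (dx (dx f) * eta1 (ndx^[k - 2] (eta2 h)))
    + sgn p • (eta2 (dx f) * ndx^[k - 1] (eta1 h) - eta1 (dx f) * ndx^[k - 1] (eta2 h))

/-- An operator on `A` is even if it preserves parities. -/
def OpEven (T : SA → SA) : Prop :=
  (∀ g, IsEven g → IsEven (T g)) ∧ (∀ g, IsOdd g → IsOdd (T g))

/-- An operator on `A` is odd if it reverses parities. -/
def OpOdd (T : SA → SA) : Prop :=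
  (∀ g, IsEven g → IsOdd (T g)) ∧ (∀ g, IsOdd g → IsEven (T g))

/-- An operator is homogeneous of parity `p`. -/
def OpHomog (p : Bool) (T : SA → SA) : Prop := if p then OpOdd T else OpEven T

/-- The monomial differential operator `m_A ∘ ∂ₓ^i ∘ ∂₁^j ∘ ∂₂^l`. -/
def mono (A : SA) (i : ℕ) (j l : Bool) (g : SA) : SA :=
  A * dx^[i] ((if j then d1 else id) ((if l then d2 else id) g))

/-- A differential operator on `A` is a finite sum `Σ m_{A_{ijl}}∘∂ₓ^i∘∂₁^j∘∂₂^l`. -/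
def IsDiffOp (T : SA → SA) : Prop :=
  ∃ L : List (SA × ℕ × Bool × Bool),
    T = fun g => (L.map fun t => mono t.1 t.2.1 t.2.2.1 t.2.2.2 g).sum

/-- Supercommutator `[S,T] = S∘T - (-1)^{|S||T|} T∘S`, with the sign `s = (-1)^{|S||T|}`
given explicitly. -/
def scomm {M : Type*} [Sub M] [SMul ℝ M] (s : ℝ) (S T : M → M) : M → M :=
  fun v => S (T v) - s • T (S v)

/-- Cup product of two even 1-cochains on homogeneous arguments of parities `p`, `q`:
`(a∨b)(f,g) = [a(f),b(g)] + [b(f),a(g)]`. -/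
def cup {M : Type*} [Sub M] [SMul ℝ M] [Add M] (p q : Bool)
    (a b : Bool → SA → M → M) (f g : SA) : M → M :=
  fun v => scomm (sgn (p && q)) (a p f) (b q g) v + scomm (sgn (p && q)) (b p f) (a q g) v

/-! Operators on `𝔉_{-k/2} ⊕ 𝔉_{k/2}`, modelled as `SA × SA`
(first factor `𝔉_{-k/2}`, second factor `𝔉_{k/2}`). -/

/-- `γ_k = ω` acting on the summand `𝔉_{k/2}`, extended by zero. -/
def gamP (_ : Bool) (f : SA) : SA × SA → SA × SA := fun v => (0, om f v.2)

/-- `γ_{-k} = ω` acting on the summand `𝔉_{-k/2}`, extended by zero. -/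
def gamM (_ : Bool) (f : SA) : SA × SA → SA × SA := fun v => (om f v.1, 0)

/-- `γ̃_k = ω̃_{k/2}` acting on the summand `𝔉_{k/2}`, extended by zero. -/
def gamtP (k : ℕ) (p : Bool) (f : SA) : SA × SA → SA × SA :=
  fun v => (0, omt ((k : ℝ) / 2) p f v.2)

/-- `γ̃_{-k} = ω̃_{-k/2}` acting on the summand `𝔉_{-k/2}`, extended by zero. -/
def gamtM (k : ℕ) (p : Bool) (f : SA) : SA × SA → SA × SA :=
  fun v => (omt (-(k : ℝ) / 2) p f v.1, 0)

/-- `Γ_k` viewed as an operator from `𝔉_{-k/2}` to `𝔉_{k/2}`. -/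
def GamP (k : ℕ) (_ : Bool) (f : SA) : SA × SA → SA × SA := fun v => (0, Gam k f v.1)

/-- `Γ̃_k` viewed as an operator from `𝔉_{-k/2}` to `𝔉_{k/2}`. -/
def GamTP (k : ℕ) (p : Bool) (f : SA) : SA × SA → SA × SA := fun v => (0, GamT k p f v.1)

/-- `Γ̄_k` viewed as an operator from `𝔉_{-k/2}` to `𝔉_{k/2}`. -/
def GamBP (k : ℕ) (p : Bool) (f : SA) : SA × SA → SA × SA := fun v => (0, GamB k p f v.1)

/-- The undeformed action `𝕃_f = 𝔏^{-k/2}_f ⊕ 𝔏^{k/2}_f` on `𝔉_{-k/2} ⊕ 𝔉_{k/2}`. -/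
def LL (k : ℕ) (p : Bool) (f : SA) : SA × SA → SA × SA :=
  fun v => (Ld (-(k : ℝ) / 2) p f v.1, Ld ((k : ℝ) / 2) p f v.2)

/-- The action of homogeneous `f` (parity `p`) on a homogeneous operator `T` (parity `t`)
on `𝔉_{-k/2} ⊕ 𝔉_{k/2}`: `f·T = [𝕃_f, T]`. -/
def actP (k : ℕ) (p t : Bool) (f : SA) (T : SA × SA → SA × SA) : SA × SA → SA × SA :=
  fun v => LL k p f (T v) - sgn (p && t) • T (LL k p f v)

/-- Parity predicates on `𝔉_{-k/2} ⊕ 𝔉_{k/2}`. -/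
def IsEvenP (v : SA × SA) : Prop := IsEven v.1 ∧ IsEven v.2

def IsOddP (v : SA × SA) : Prop := IsOdd v.1 ∧ IsOdd v.2

def OpEvenP (T : SA × SA → SA × SA) : Prop :=
  (∀ v, IsEvenP v → IsEvenP (T v)) ∧ (∀ v, IsOddP v → IsOddP (T v))

def OpOddP (T : SA × SA → SA × SA) : Prop :=
  (∀ v, IsEvenP v → IsOddP (T v)) ∧ (∀ v, IsOddP v → IsEvenP (T v))

def OpHomogP (p : Bool) (T : SA × SA → SA × SA) : Prop := if p then OpOddP T else OpEvenP T

/-- A differential-operator-valued endomorphism of `𝔉_{-k/2} ⊕ 𝔉_{k/2}`: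
a 2×2 block matrix of differential operators. -/
def IsDiffOpP (T : SA × SA → SA × SA) : Prop :=
  ∃ T11 T12 T21 T22 : SA → SA,
    IsDiffOp T11 ∧ IsDiffOp T12 ∧ IsDiffOp T21 ∧ IsDiffOp T22 ∧
    T = fun v => (T11 v.1 + T12 v.2, T21 v.1 + T22 v.2)

/-- A differential operator from `𝔉_{-k/2}` to `𝔉_{k/2}`, as an endomorphism of the sum. -/
def IsDiffOpLower (T : SA × SA → SA × SA) : Prop :=
  ∃ D : SA → SA, IsDiffOp D ∧ T = fun v => (0, D v.1)

end SA

end OSP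
namespace OSP
namespace SA

-- auxiliary block to be inserted before the theorem
theorem ext' {f g : SA} (h0 : f.c0 = g.c0) (h1 : f.c1 = g.c1) (h2 : f.c2 = g.c2)
    (h12 : f.c12 = g.c12) : f = g := by
  cases f; cases g; simp_all

theorem smooth_diffble {f : ℝ → ℝ} (hf : Smooth f) : Differentiable ℝ f :=
  ContDiff.differentiable hf (by simp)

theorem deriv_hmul (b x : ℝ) : deriv (HMul.hMul b) x = b := by
  have h : (HMul.hMul b : ℝ → ℝ) = fun y => b * y := rfl
  rw [h, deriv_const_mul _ differentiableAt_fun_id, deriv_id'', mul_one]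

theorem add_c0 (f g : SA) : (f + g).c0 = fun x => f.c0 x + g.c0 x := rfl
theorem add_c1 (f g : SA) : (f + g).c1 = fun x => f.c1 x + g.c1 x := rfl
theorem add_c2 (f g : SA) : (f + g).c2 = fun x => f.c2 x + g.c2 x := rfl
theorem add_c12 (f g : SA) : (f + g).c12 = fun x => f.c12 x + g.c12 x := rfl
theorem sub_c0 (f g : SA) : (f - g).c0 = fun x => f.c0 x - g.c0 x := rfl
theorem sub_c1 (f g : SA) : (f - g).c1 = fun x => f.c1 x - g.c1 x := rfl
theorem sub_c2 (f g : SA) : (f - g).c2 = fun x => f.c2 x - g.c2 x := rfl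
theorem sub_c12 (f g : SA) : (f - g).c12 = fun x => f.c12 x - g.c12 x := rfl
theorem neg_c0 (f : SA) : (-f).c0 = fun x => -(f.c0 x) := rfl
theorem neg_c1 (f : SA) : (-f).c1 = fun x => -(f.c1 x) := rfl
theorem neg_c2 (f : SA) : (-f).c2 = fun x => -(f.c2 x) := rfl
theorem neg_c12 (f : SA) : (-f).c12 = fun x => -(f.c12 x) := rfl
theorem smul_c0 (r : ℝ) (f : SA) : (r • f).c0 = fun x => r * f.c0 x := rfl
theorem smul_c1 (r : ℝ) (f : SA) : (r • f).c1 = fun x => r * f.c1 x := rfl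
theorem smul_c2 (r : ℝ) (f : SA) : (r • f).c2 = fun x => r * f.c2 x := rfl
theorem smul_c12 (r : ℝ) (f : SA) : (r • f).c12 = fun x => r * f.c12 x := rfl
theorem mul_c0 (f g : SA) : (f * g).c0 = fun x => f.c0 x * g.c0 x := rfl
theorem mul_c1 (f g : SA) : (f * g).c1 = fun x => f.c0 x * g.c1 x + f.c1 x * g.c0 x := rfl
theorem mul_c2 (f g : SA) : (f * g).c2 = fun x => f.c0 x * g.c2 x + f.c2 x * g.c0 x := rfl
theorem mul_c12 (f g : SA) : (f * g).c12 =
    fun x => f.c0 x * g.c12 x + f.c12 x * g.c0 x + f.c1 x * g.c2 x - f.c2 x * g.c1 x := rfl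
theorem dx_c0 (f : SA) : (dx f).c0 = deriv f.c0 := rfl
theorem dx_c1 (f : SA) : (dx f).c1 = deriv f.c1 := rfl
theorem dx_c2 (f : SA) : (dx f).c2 = deriv f.c2 := rfl
theorem dx_c12 (f : SA) : (dx f).c12 = deriv f.c12 := rfl
theorem d1_c0 (f : SA) : (d1 f).c0 = f.c1 := rfl
theorem d1_c1 (f : SA) : (d1 f).c1 = fun _ => 0 := rfl
theorem d1_c2 (f : SA) : (d1 f).c2 = f.c12 := rfl
theorem d1_c12 (f : SA) : (d1 f).c12 = fun _ => 0 := rfl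
theorem d2_c0 (f : SA) : (d2 f).c0 = f.c2 := rfl
theorem d2_c1 (f : SA) : (d2 f).c1 = fun x => -(f.c12 x) := rfl
theorem d2_c2 (f : SA) : (d2 f).c2 = fun _ => 0 := rfl
theorem d2_c12 (f : SA) : (d2 f).c12 = fun _ => 0 := rfl
theorem one_c0 : (1 : SA).c0 = fun _ => 1 := rfl
theorem one_c1 : (1 : SA).c1 = fun _ => 0 := rfl
theorem one_c2 : (1 : SA).c2 = fun _ => 0 := rfl
theorem one_c12 : (1 : SA).c12 = fun _ => 0 := rfl

set_option maxHeartbeats 2000000 in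
/-- for every `λ`,
`ω̃_λ(f) = 2λ m_{η̄₁(∂₂f)} - (-1)^{|f|}(m_{∂₂f}∘η̄₁ + m_{θ₂η̄₂η̄₁(f)}∘η̄₂)` is a
1-cocycle of `𝔬𝔰𝔭(2|2)` with values in `𝔇_{λ,λ}`. -/
theorem omt_is_cocycle :
    ∀ (lam : ℝ) (p q : Bool) (f g : SA),
      Homog p f → Homog q g → memOsp f → memOsp g →
      ∀ h : SA,
        act lam lam p q f (omt lam q g) h
            - sgn (p && q) • act lam lam q p g (omt lam p f) h
          = omt lam (p ^^ q) (cbr p f g) h := by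
  intro lam p q f g hf hg hfo hgo h
  obtain ⟨fa,fb,fc,fd,fe,fp,fq,fr, rfl⟩ := hfo
  obtain ⟨ga,gb,gc,gd,ge,gp,gq,gr, rfl⟩ := hgo
  cases p <;> cases q
  · simp only [Homog, Bool.false_eq_true, if_false, if_true, IsEven, IsOdd,
      add_c0, add_c1, add_c2, add_c12, smul_c0, smul_c1, smul_c2, smul_c12,
      one_c0, one_c1, one_c2, one_c12, xe, xsq, th1, th2, xth1, xth2, th12] at hf hg
    obtain ⟨hf1, hf2⟩ := hf
    have hfd0 : fd = 0 := by have := hf1 0; simpa using this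
    have hfp0 : fp = 0 := by have t0 := hf1 0; have t1 := hf1 1; simp at t0 t1; linarith
    have hfe0 : fe = 0 := by have := hf2 0; simpa using this
    have hfq0 : fq = 0 := by have t0 := hf2 0; have t1 := hf2 1; simp at t0 t1; linarith
    subst hfd0 hfp0 hfe0 hfq0
    obtain ⟨hg1, hg2⟩ := hg
    have hgd0 : gd = 0 := by have := hg1 0; simpa using this
    have hgp0 : gp = 0 := by have t0 := hg1 0; have t1 := hg1 1; simp at t0 t1; linarith
    have hge0 : ge = 0 := by have := hg2 0; simpa using this
    have hgq0 : gq = 0 := by have t0 := hg2 0; have t1 := hg2 1; simp at t0 t1; linarith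
    subst hgd0 hgp0 hge0 hgq0
    have H0 : Differentiable ℝ h.c0 := smooth_diffble h.h0
    have H1 : Differentiable ℝ h.c1 := smooth_diffble h.h1
    have H2 : Differentiable ℝ h.c2 := smooth_diffble h.h2
    have H12 : Differentiable ℝ h.c12 := smooth_diffble h.h12
    have H0' : Differentiable ℝ (deriv h.c0) := smooth_diffble h.h0.deriv
    have H1' : Differentiable ℝ (deriv h.c1) := smooth_diffble h.h1.deriv
    have H2' : Differentiable ℝ (deriv h.c2) := smooth_diffble h.h2.deriv
    have H12' : Differentiable ℝ (deriv h.c12) := smooth_diffble h.h12.deriv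
    refine ext' ?_ ?_ ?_ ?_ <;> funext x <;>
    · simp only [act, Ld, omt, cbr, om, eta1, eta2, sgn,
        add_c0, add_c1, add_c2, add_c12, sub_c0, sub_c1, sub_c2, sub_c12,
        neg_c0, neg_c1, neg_c2, neg_c12, smul_c0, smul_c1, smul_c2, smul_c12,
        mul_c0, mul_c1, mul_c2, mul_c12, dx_c0, dx_c1, dx_c2, dx_c12,
        d1_c0, d1_c1, d1_c2, d1_c12, d2_c0, d2_c1, d2_c2, d2_c12,
        one_c0, one_c1, one_c2, one_c12, xe, xsq, th1, th2, xth1, xth2, th12,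
        Bool.false_eq_true, Bool.true_and, Bool.and_true, Bool.false_and, Bool.and_false,
        Bool.and_self, Bool.xor_false, Bool.false_xor, Bool.xor_self, reduceIte,
        zero_mul, mul_zero, add_zero, zero_add, neg_zero, sub_zero, zero_sub, mul_one, one_mul,
        neg_neg, sub_self]
      simp (disch := fun_prop) only [deriv_fun_add, deriv_fun_sub, deriv_fun_mul,
        deriv_const_mul_field', deriv_hmul, deriv_const', deriv_id'', deriv.fun_neg, deriv_neg,
        zero_mul, mul_zero, add_zero, zero_add, neg_zero, sub_zero, mul_one, one_mul]
      ring
  · simp only [Homog, Bool.false_eq_true, if_false, if_true, IsEven, IsOdd,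
      add_c0, add_c1, add_c2, add_c12, smul_c0, smul_c1, smul_c2, smul_c12,
      one_c0, one_c1, one_c2, one_c12, xe, xsq, th1, th2, xth1, xth2, th12] at hf hg
    obtain ⟨hf1, hf2⟩ := hf
    have hfd0 : fd = 0 := by have := hf1 0; simpa using this
    have hfp0 : fp = 0 := by have t0 := hf1 0; have t1 := hf1 1; simp at t0 t1; linarith
    have hfe0 : fe = 0 := by have := hf2 0; simpa using this
    have hfq0 : fq = 0 := by have t0 := hf2 0; have t1 := hf2 1; simp at t0 t1; linarith
    subst hfd0 hfp0 hfe0 hfq0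
    obtain ⟨hg1, hg2⟩ := hg
    have hga0 : ga = 0 := by have := hg1 0; simpa using this
    have hgb0 : gb = 0 := by
      have t0 := hg1 0; have t1 := hg1 1; have t2 := hg1 (-1); simp at t0 t1 t2; linarith
    have hgc0 : gc = 0 := by
      have t0 := hg1 0; have t1 := hg1 1; have t2 := hg1 (-1); simp at t0 t1 t2; linarith
    have hgr0 : gr = 0 := by have := hg2 0; simpa using this
    subst hga0 hgb0 hgc0 hgr0
    have H0 : Differentiable ℝ h.c0 := smooth_diffble h.h0
    have H1 : Differentiable ℝ h.c1 := smooth_diffble h.h1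
    have H2 : Differentiable ℝ h.c2 := smooth_diffble h.h2
    have H12 : Differentiable ℝ h.c12 := smooth_diffble h.h12
    have H0' : Differentiable ℝ (deriv h.c0) := smooth_diffble h.h0.deriv
    have H1' : Differentiable ℝ (deriv h.c1) := smooth_diffble h.h1.deriv
    have H2' : Differentiable ℝ (deriv h.c2) := smooth_diffble h.h2.deriv
    have H12' : Differentiable ℝ (deriv h.c12) := smooth_diffble h.h12.deriv
    refine ext' ?_ ?_ ?_ ?_ <;> funext x <;>
    · simp only [act, Ld, omt, cbr, om, eta1, eta2, sgn,
        add_c0, add_c1, add_c2, add_c12, sub_c0, sub_c1, sub_c2, sub_c12,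
        neg_c0, neg_c1, neg_c2, neg_c12, smul_c0, smul_c1, smul_c2, smul_c12,
        mul_c0, mul_c1, mul_c2, mul_c12, dx_c0, dx_c1, dx_c2, dx_c12,
        d1_c0, d1_c1, d1_c2, d1_c12, d2_c0, d2_c1, d2_c2, d2_c12,
        one_c0, one_c1, one_c2, one_c12, xe, xsq, th1, th2, xth1, xth2, th12,
        Bool.false_eq_true, Bool.true_and, Bool.and_true, Bool.false_and, Bool.and_false,
        Bool.and_self, Bool.xor_false, Bool.false_xor, Bool.xor_self, reduceIte,
        zero_mul, mul_zero, add_zero, zero_add, neg_zero, sub_zero, zero_sub, mul_one, one_mul,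
        neg_neg, sub_self]
      simp (disch := fun_prop) only [deriv_fun_add, deriv_fun_sub, deriv_fun_mul,
        deriv_const_mul_field', deriv_hmul, deriv_const', deriv_id'', deriv.fun_neg, deriv_neg,
        zero_mul, mul_zero, add_zero, zero_add, neg_zero, sub_zero, mul_one, one_mul]
      ring
  · simp only [Homog, Bool.false_eq_true, if_false, if_true, IsEven, IsOdd,
      add_c0, add_c1, add_c2, add_c12, smul_c0, smul_c1, smul_c2, smul_c12,
      one_c0, one_c1, one_c2, one_c12, xe, xsq, th1, th2, xth1, xth2, th12] at hf hg
    obtain ⟨hf1, hf2⟩ := hf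
    have hfa0 : fa = 0 := by have := hf1 0; simpa using this
    have hfb0 : fb = 0 := by
      have t0 := hf1 0; have t1 := hf1 1; have t2 := hf1 (-1); simp at t0 t1 t2; linarith
    have hfc0 : fc = 0 := by
      have t0 := hf1 0; have t1 := hf1 1; have t2 := hf1 (-1); simp at t0 t1 t2; linarith
    have hfr0 : fr = 0 := by have := hf2 0; simpa using this
    subst hfa0 hfb0 hfc0 hfr0
    obtain ⟨hg1, hg2⟩ := hg
    have hgd0 : gd = 0 := by have := hg1 0; simpa using this
    have hgp0 : gp = 0 := by have t0 := hg1 0; have t1 := hg1 1; simp at t0 t1; linarith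
    have hge0 : ge = 0 := by have := hg2 0; simpa using this
    have hgq0 : gq = 0 := by have t0 := hg2 0; have t1 := hg2 1; simp at t0 t1; linarith
    subst hgd0 hgp0 hge0 hgq0
    have H0 : Differentiable ℝ h.c0 := smooth_diffble h.h0
    have H1 : Differentiable ℝ h.c1 := smooth_diffble h.h1
    have H2 : Differentiable ℝ h.c2 := smooth_diffble h.h2
    have H12 : Differentiable ℝ h.c12 := smooth_diffble h.h12
    have H0' : Differentiable ℝ (deriv h.c0) := smooth_diffble h.h0.deriv
    have H1' : Differentiable ℝ (deriv h.c1) := smooth_diffble h.h1.deriv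
    have H2' : Differentiable ℝ (deriv h.c2) := smooth_diffble h.h2.deriv
    have H12' : Differentiable ℝ (deriv h.c12) := smooth_diffble h.h12.deriv
    refine ext' ?_ ?_ ?_ ?_ <;> funext x <;>
    · simp only [act, Ld, omt, cbr, om, eta1, eta2, sgn,
        add_c0, add_c1, add_c2, add_c12, sub_c0, sub_c1, sub_c2, sub_c12,
        neg_c0, neg_c1, neg_c2, neg_c12, smul_c0, smul_c1, smul_c2, smul_c12,
        mul_c0, mul_c1, mul_c2, mul_c12, dx_c0, dx_c1, dx_c2, dx_c12,
        d1_c0, d1_c1, d1_c2, d1_c12, d2_c0, d2_c1, d2_c2, d2_c12,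
        one_c0, one_c1, one_c2, one_c12, xe, xsq, th1, th2, xth1, xth2, th12,
        Bool.false_eq_true, Bool.true_and, Bool.and_true, Bool.false_and, Bool.and_false,
        Bool.and_self, Bool.xor_false, Bool.false_xor, Bool.xor_self, reduceIte,
        zero_mul, mul_zero, add_zero, zero_add, neg_zero, sub_zero, zero_sub, mul_one, one_mul,
        neg_neg, sub_self]
      simp (disch := fun_prop) only [deriv_fun_add, deriv_fun_sub, deriv_fun_mul,
        deriv_const_mul_field', deriv_hmul, deriv_const', deriv_id'', deriv.fun_neg, deriv_neg,
        zero_mul, mul_zero, add_zero, zero_add, neg_zero, sub_zero, mul_one, one_mul]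
      ring
  · simp only [Homog, Bool.false_eq_true, if_false, if_true, IsEven, IsOdd,
      add_c0, add_c1, add_c2, add_c12, smul_c0, smul_c1, smul_c2, smul_c12,
      one_c0, one_c1, one_c2, one_c12, xe, xsq, th1, th2, xth1, xth2, th12] at hf hg
    obtain ⟨hf1, hf2⟩ := hf
    have hfa0 : fa = 0 := by have := hf1 0; simpa using this
    have hfb0 : fb = 0 := by
      have t0 := hf1 0; have t1 := hf1 1; have t2 := hf1 (-1); simp at t0 t1 t2; linarith
    have hfc0 : fc = 0 := by
      have t0 := hf1 0; have t1 := hf1 1; have t2 := hf1 (-1); simp at t0 t1 t2; linarith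
    have hfr0 : fr = 0 := by have := hf2 0; simpa using this
    subst hfa0 hfb0 hfc0 hfr0
    obtain ⟨hg1, hg2⟩ := hg
    have hga0 : ga = 0 := by have := hg1 0; simpa using this
    have hgb0 : gb = 0 := by
      have t0 := hg1 0; have t1 := hg1 1; have t2 := hg1 (-1); simp at t0 t1 t2; linarith
    have hgc0 : gc = 0 := by
      have t0 := hg1 0; have t1 := hg1 1; have t2 := hg1 (-1); simp at t0 t1 t2; linarith
    have hgr0 : gr = 0 := by have := hg2 0; simpa using this
    subst hga0 hgb0 hgc0 hgr0
    have H0 : Differentiable ℝ h.c0 := smooth_diffble h.h0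
    have H1 : Differentiable ℝ h.c1 := smooth_diffble h.h1
    have H2 : Differentiable ℝ h.c2 := smooth_diffble h.h2
    have H12 : Differentiable ℝ h.c12 := smooth_diffble h.h12
    have H0' : Differentiable ℝ (deriv h.c0) := smooth_diffble h.h0.deriv
    have H1' : Differentiable ℝ (deriv h.c1) := smooth_diffble h.h1.deriv
    have H2' : Differentiable ℝ (deriv h.c2) := smooth_diffble h.h2.deriv
    have H12' : Differentiable ℝ (deriv h.c12) := smooth_diffble h.h12.deriv
    refine ext' ?_ ?_ ?_ ?_ <;> funext x <;>
    · simp only [act, Ld, omt, cbr, om, eta1, eta2, sgn,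
        add_c0, add_c1, add_c2, add_c12, sub_c0, sub_c1, sub_c2, sub_c12,
        neg_c0, neg_c1, neg_c2, neg_c12, smul_c0, smul_c1, smul_c2, smul_c12,
        mul_c0, mul_c1, mul_c2, mul_c12, dx_c0, dx_c1, dx_c2, dx_c12,
        d1_c0, d1_c1, d1_c2, d1_c12, d2_c0, d2_c1, d2_c2, d2_c12,
        one_c0, one_c1, one_c2, one_c12, xe, xsq, th1, th2, xth1, xth2, th12,
        Bool.false_eq_true, Bool.true_and, Bool.and_true, Bool.false_and, Bool.and_false,
        Bool.and_self, Bool.xor_false, Bool.false_xor, Bool.xor_self, reduceIte,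
        zero_mul, mul_zero, add_zero, zero_add, neg_zero, sub_zero, zero_sub, mul_one, one_mul,
        neg_neg, sub_self]
      simp (disch := fun_prop) only [deriv_fun_add, deriv_fun_sub, deriv_fun_mul,
        deriv_const_mul_field', deriv_hmul, deriv_const', deriv_id'', deriv.fun_neg, deriv_neg,
        zero_mul, mul_zero, add_zero, zero_add, neg_zero, sub_zero, mul_one, one_mul]
      ring


end SA
end OSP
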